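/- Let H be a Hilbert space, U ⊆ ℂ a domain, and E the trivial holomorphic line bundle U × ℂ with frame 𝕀. Suppose for each t ∈ U a surjective bounded linear map π_t : H → ℂ is given such that ker(π_t) varies holomorphically (i.e., for each f ∈ H, t ↦ π_t(f) is holomorphic). Define a metric by e^{-ϕ(t)} := inf{ ‖f‖² : f ∈ H, π_t(f) = 1 }. Then ϕ is subharmonic on U. -/

import Mathlib

/-! By the Riesz representation theorem the smallest norm of a solution of `π t f = 1` is
`‖π t‖⁻¹`, so `ϕ = 2 log ‖π t‖` on `U`. Weak holomorphy makes `t ↦ π t` continuous in norm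
(Banach–Steinhaus, then Schwarz's lemma), hence `ϕ` is continuous. For the sub-mean value
inequality at `c`, take `f` in the unit ball with `π c f = ‖π c‖`: then `log ‖π t‖ ≥ log |π t f|`
with equality at `c`, and `log |π t f|` satisfies the inequality by Jensen's formula. -/

open Complex MeasureTheory Metric Set Filter

noncomputable section

/-- A function is subharmonic on `U ⊆ ℂ` if it is upper semicontinuous on `U` and satisfies
the sub-mean value inequality on every circle whose closed disc is contained in `U`. -/
def SubharmonicOn (u : ℂ → ℝ) (U : Set ℂ) : Prop :=
  UpperSemicontinuousOn u U ∧
    ∀ c : ℂ, ∀ R : ℝ, 0 < R → closedBall c R ⊆ U →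
      u c ≤ (2 * Real.pi)⁻¹ *
        ∫ θ in (0:ℝ)..(2 * Real.pi), u (c + R * Complex.exp (θ * Complex.I))

/-- A function is plurisubharmonic on `Ω` in a complex normed space if it is upper
semicontinuous on `Ω` and satisfies the sub-mean value inequality along every complex line. -/
def PlurisubharmonicOn {E : Type*} [NormedAddCommGroup E] [NormedSpace ℂ E]
    (φ : E → ℝ) (Ω : Set E) : Prop :=
  UpperSemicontinuousOn φ Ω ∧
    ∀ a b : E, ∀ R : ℝ, 0 < R →
      (∀ w : ℂ, ‖w‖ ≤ R → a + w • b ∈ Ω) →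
      φ a ≤ (2 * Real.pi)⁻¹ *
        ∫ θ in (0:ℝ)..(2 * Real.pi), φ (a + (R * Complex.exp (θ * Complex.I)) • b)

/-- A domain is pseudoconvex if it is open and admits a plurisubharmonic exhaustion function. -/
def Pseudoconvex {E : Type*} [NormedAddCommGroup E] [NormedSpace ℂ E]
    (Ω : Set E) : Prop :=
  IsOpen Ω ∧ ∃ ρ : E → ℝ, PlurisubharmonicOn ρ Ω ∧
    ∀ c : ℝ, IsCompact {x ∈ Ω | ρ x ≤ c}

/-- The `n`-dimensional torus, viewed as the unimodular elements of `ℂⁿ`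
(acting on `ℂⁿ` by coordinatewise multiplication, i.e. coordinatewise rotation). -/
def UnitTorus (n : ℕ) : Set (Fin n → ℂ) := {α | ∀ i, ‖α i‖ = 1}

section Riesz

variable {𝕜 H : Type*} [RCLike 𝕜] [NormedAddCommGroup H] [InnerProductSpace 𝕜 H] [CompleteSpace H]

theorem exists_norm_le_one_apply_eq_norm (ℓ : H →L[𝕜] 𝕜) :
    ∃ f : H, ‖f‖ ≤ 1 ∧ ℓ f = ‖ℓ‖ := by
  set g := (InnerProductSpace.toDual 𝕜 H).symm ℓ
  have hg : ‖g‖ = ‖ℓ‖ := LinearIsometryEquiv.norm_map _ _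
  refine ⟨(‖g‖⁻¹ : 𝕜) • g, ?_, ?_⟩
  · rw [norm_smul, norm_inv, RCLike.norm_ofReal, abs_norm]
    exact inv_mul_le_one
  · rw [map_smul, ← InnerProductSpace.toDual_symm_apply, inner_self_eq_norm_sq_to_K, hg,
      smul_eq_mul]
    rcases eq_or_ne ‖ℓ‖ 0 with h | h
    · simp [h]
    · field_simp

theorem isLeast_norm_sq_of_apply_eq_one (ℓ : H →L[𝕜] 𝕜) (hℓ : ℓ ≠ 0) :
    IsLeast {x : ℝ | ∃ f : H, ℓ f = 1 ∧ x = ‖f‖ ^ 2} (‖ℓ‖ ^ 2)⁻¹ := by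
  have hℓpos : 0 < ‖ℓ‖ := norm_pos_iff.mpr hℓ
  have lower : ∀ f : H, ℓ f = 1 → ‖ℓ‖⁻¹ ≤ ‖f‖ := fun f hf => by
    rw [inv_le_iff_one_le_mul₀' hℓpos]
    simpa [hf] using ℓ.le_opNorm f
  obtain ⟨f, hf, hℓf⟩ := exists_norm_le_one_apply_eq_norm ℓ
  set f₁ : H := (‖ℓ‖⁻¹ : 𝕜) • f
  have hf₁ : ℓ f₁ = 1 := by
    rw [map_smul, hℓf, smul_eq_mul]
    exact inv_mul_cancel₀ (mod_cast hℓpos.ne')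
  have hnorm : ‖f₁‖ = ‖ℓ‖⁻¹ := by
    refine le_antisymm ?_ (lower f₁ hf₁)
    rw [norm_smul, norm_inv, RCLike.norm_ofReal, abs_norm]
    exact mul_le_of_le_one_right (by positivity) hf
  refine ⟨⟨f₁, hf₁, by rw [hnorm, inv_pow]⟩, ?_⟩
  rintro x ⟨f, hf, rfl⟩
  rw [← inv_pow]
  exact pow_le_pow_left₀ (by positivity) (lower f hf) 2

end Riesz

theorem continuousOn_of_differentiableOn_apply {E F : Type*} [NormedAddCommGroup E]
    [NormedSpace ℂ E] [CompleteSpace E] [NormedAddCommGroup F] [NormedSpace ℂ F]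
    {π : ℂ → E →L[ℂ] F} {U : Set ℂ} (hU : IsOpen U)
    (hπ : ∀ f : E, DifferentiableOn ℂ (fun t => π t f) U) : ContinuousOn π U := by
  -- Banach–Steinhaus bounds `π` on a disc around `c`; Schwarz's lemma makes it Lipschitz at `c`.
  intro c hc
  obtain ⟨r, hr, hrU⟩ := nhds_basis_closedBall.mem_iff.mp (hU.mem_nhds hc)
  obtain ⟨C, hC⟩ : ∃ C, ∀ t : closedBall c r, ‖π t‖ ≤ C := by
    refine banach_steinhaus fun f => ?_
    obtain ⟨C, hC⟩ := (isCompact_closedBall c r).exists_bound_of_continuousOn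
      ((hπ f).continuousOn.mono hrU)
    exact ⟨C, fun t => hC t t.2⟩
  have hC₀ : 0 ≤ C := (norm_nonneg _).trans (hC ⟨c, mem_closedBall_self hr.le⟩)
  have bound : ∀ s ∈ closedBall c r, ∀ f, ‖π s f‖ ≤ C * ‖f‖ := fun s hs f =>
    ((π s).le_opNorm f).trans (mul_le_mul_of_nonneg_right (hC ⟨s, hs⟩) (norm_nonneg f))
  refine (continuousAt_of_locally_lipschitz hr (2 * C / r) fun z hz => ?_).continuousWithinAt
  rw [dist_eq_norm]
  refine (π z - π c).opNorm_le_bound (by positivity) fun f => ?_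
  have hmaps : MapsTo (fun t => π t f) (ball c r) (closedBall (π c f) (2 * C * ‖f‖)) := by
    intro t ht
    rw [mem_closedBall, dist_eq_norm]
    calc ‖π t f - π c f‖ ≤ ‖π t f‖ + ‖π c f‖ := norm_sub_le _ _
      _ ≤ C * ‖f‖ + C * ‖f‖ :=
        add_le_add (bound t (ball_subset_closedBall ht) f) (bound c (mem_closedBall_self hr.le) f)
      _ = 2 * C * ‖f‖ := by ring
  have hschwarz := Complex.dist_le_div_mul_dist_of_mapsTo_ball
    ((hπ f).mono (ball_subset_closedBall.trans hrU)) hmaps hz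
  rw [dist_eq_norm] at hschwarz
  calc ‖(π z - π c) f‖ ≤ 2 * C * ‖f‖ / r * dist z c := hschwarz
    _ = 2 * C / r * dist z c * ‖f‖ := by ring

theorem Real.circleAverage_mono_codiscreteWithin {f₁ f₂ : ℂ → ℝ} {c : ℂ} {R : ℝ} (hR : R ≠ 0)
    (hf₁ : CircleIntegrable f₁ c R) (hf₂ : CircleIntegrable f₂ c R)
    (h : f₁ ≤ᶠ[codiscreteWithin (sphere c |R|)] f₂) :
    Real.circleAverage f₁ c R ≤ Real.circleAverage f₂ c R := by
  rw [Real.circleAverage, Real.circleAverage, smul_eq_mul, smul_eq_mul]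
  refine mul_le_mul_of_nonneg_left ?_ (by positivity)
  refine intervalIntegral.integral_mono_ae_restrict Real.two_pi_pos.le hf₁ hf₂ ?_
  exact ae_restrict_le_codiscreteWithin measurableSet_Icc
    (codiscreteWithin_mono (subset_univ _) (circleMap_preimage_codiscrete hR h))

/-- Jensen's formula, read as an inequality: the zeros inside the disc only add to the average. -/
theorem AnalyticOnNhd.log_norm_le_circleAverage {f : ℂ → ℂ} {c : ℂ} {R : ℝ} (hR : R ≠ 0)
    (hf : AnalyticOnNhd ℂ f (closedBall c |R|)) (hc : f c ≠ 0) :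
    Real.log ‖f c‖ ≤ Real.circleAverage (Real.log ‖f ·‖) c R := by
  rw [hf.circleAverage_log_norm hR hc, le_add_iff_nonneg_left]
  refine finsum_nonneg fun u => ?_
  by_cases hu : u ∈ closedBall c |R|
  · refine mul_nonneg (mod_cast MeromorphicOn.AnalyticOnNhd.divisor_nonneg hf u) ?_
    rcases eq_or_ne u c with rfl | huc
    · simp
    rw [← Real.log_abs, abs_mul, abs_inv, abs_norm, ← div_eq_mul_inv]
    refine Real.log_nonneg ((one_le_div (norm_pos_iff.mpr (sub_ne_zero.mpr huc.symm))).mpr ?_)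
    simpa [dist_eq_norm'] using hu
  · simp [hu]

theorem log_norm_le_circleAverage_log_norm {H : Type*} [NormedAddCommGroup H]
    [InnerProductSpace ℂ H] [CompleteSpace H] {π : ℂ → H →L[ℂ] ℂ} {U : Set ℂ} (hU : IsOpen U)
    (hπ : ∀ f : H, DifferentiableOn ℂ (fun t => π t f) U) (hne : ∀ t ∈ U, π t ≠ 0)
    {c : ℂ} {R : ℝ} (hR : 0 < R) (hcR : closedBall c R ⊆ U) :
    Real.log ‖π c‖ ≤ Real.circleAverage (fun t => Real.log ‖π t‖) c R := by
  obtain ⟨f, hf, hπf⟩ := exists_norm_le_one_apply_eq_norm (π c)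
  have hcU : c ∈ U := hcR (mem_closedBall_self hR.le)
  have han : AnalyticOnNhd ℂ (fun t => π t f) (closedBall c |R|) :=
    ((hπ f).analyticOnNhd hU).mono (by rwa [abs_of_pos hR])
  have hfc : π c f ≠ 0 := by simpa [hπf] using hne c hcU
  have hsphere : sphere c |R| ⊆ U := sphere_subset_closedBall.trans (by rwa [abs_of_pos hR])
  have hint : CircleIntegrable (fun t => Real.log ‖π t‖) c R :=
    ContinuousOn.circleIntegrable' <| ((continuousOn_of_differentiableOn_apply hU hπ).norm.log
      fun t ht => norm_ne_zero_iff.mpr (hne t ht)).mono hsphere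
  -- only off the zeros of `t ↦ π t f`, where `Real.log 0 = 0` spoils the bound; they are isolated
  have hle : (fun t => Real.log ‖π t f‖) ≤ᶠ[codiscreteWithin (sphere c |R|)]
      fun t => Real.log ‖π t‖ := by
    filter_upwards [codiscreteWithin_mono sphere_subset_closedBall
      (han.preimage_zero_mem_codiscreteWithin hfc (mem_closedBall_self (abs_nonneg R))
        (isConnected_closedBall (abs_nonneg R)))] with t ht
    exact Real.log_le_log (norm_pos_iff.mpr ht)
      (((π t).le_opNorm f).trans (mul_le_of_le_one_right (norm_nonneg _) hf))
  calc Real.log ‖π c‖ = Real.log ‖π c f‖ := by simp [hπf]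
    _ ≤ Real.circleAverage (fun t => Real.log ‖π t f‖) c R :=
      han.log_norm_le_circleAverage hR.ne' hfc
    _ ≤ Real.circleAverage (fun t => Real.log ‖π t‖) c R :=
      Real.circleAverage_mono_codiscreteWithin hR.ne'
        (han.mono sphere_subset_closedBall).meromorphicOn.circleIntegrable_log_norm hint hle

theorem quotient_metric_subharmonic_general
    (H : Type*) [NormedAddCommGroup H] [InnerProductSpace ℂ H] [CompleteSpace H]
    (U : Set ℂ) (hUopen : IsOpen U)
    (π : ℂ → H →L[ℂ] ℂ)
    (hsurj : ∀ t ∈ U, Function.Surjective (π t))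
    (hholo : ∀ f : H, DifferentiableOn ℂ (fun t => π t f) U)
    (ϕ : ℂ → ℝ)
    (hϕ : ∀ t ∈ U, Real.exp (-ϕ t) = sInf {x : ℝ | ∃ f : H, π t f = 1 ∧ x = ‖f‖ ^ 2}) :
    SubharmonicOn ϕ U := by
  have hne : ∀ t ∈ U, π t ≠ 0 := fun t ht h0 => by
    obtain ⟨f, hf⟩ := hsurj t ht 1
    simp [h0] at hf
  have hϕ_eq : EqOn ϕ (fun t => 2 * Real.log ‖π t‖) U := fun t ht => by
    have h := congrArg Real.log (hϕ t ht)
    rw [(isLeast_norm_sq_of_apply_eq_one (π t) (hne t ht)).csInf_eq, Real.log_exp,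
      Real.log_inv, Real.log_pow] at h
    push_cast at h
    linarith
  have hcont : ContinuousOn ϕ U :=
    (continuousOn_const.mul ((continuousOn_of_differentiableOn_apply hUopen hholo).norm.log
      fun t ht => norm_ne_zero_iff.mpr (hne t ht))).congr hϕ_eq
  refine ⟨hcont.upperSemicontinuousOn, fun c R hR hcR => ?_⟩
  change ϕ c ≤ Real.circleAverage ϕ c R
  have hsphere : sphere c |R| ⊆ U := sphere_subset_closedBall.trans (by rwa [abs_of_pos hR])
  rw [Real.circleAverage_congr_sphere (hϕ_eq.mono hsphere), hϕ_eq (hcR (mem_closedBall_self hR.le))]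
  simp_rw [← smul_eq_mul (a := (2 : ℝ)), Real.circleAverage_fun_smul]
  exact smul_le_smul_of_nonneg_left (log_norm_le_circleAverage_log_norm hUopen hholo hne hR hcR)
    zero_le_two

/-- **Subharmonicity of quotient metrics.** Let `H` be a Hilbert space and, for each `t` in a
domain `U ⊆ ℂ`, let `π t : H → ℂ` be a surjective bounded linear map depending holomorphically
on `t`. If `e^{-ϕ(t)} = inf { ‖f‖² : π t f = 1 }`, then `ϕ` is subharmonic on `U`. -/
theorem quotient_metric_subharmonic
    (H : Type*) [NormedAddCommGroup H] [InnerProductSpace ℂ H] [CompleteSpace H]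
    (U : Set ℂ) (hUopen : IsOpen U) (hUconn : IsConnected U)
    (π : ℂ → H →L[ℂ] ℂ)
    (hsurj : ∀ t ∈ U, Function.Surjective (π t))
    (hholo : ∀ f : H, DifferentiableOn ℂ (fun t => π t f) U)
    (ϕ : ℂ → ℝ)
    (hϕ : ∀ t ∈ U, Real.exp (-ϕ t) = sInf {x : ℝ | ∃ f : H, π t f = 1 ∧ x = ‖f‖ ^ 2}) :
    SubharmonicOn ϕ U :=
  quotient_metric_subharmonic_general H U hUopen π hsurj hholo ϕ hϕ
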